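/- Let jobs a_i and a_j each be assigned to exactly r servers among c servers, with no server assigned both jobs. Then g(0,x) := ∑_{Ŝ, |Ŝ|=x} max(n_{i,Ŝ}−1,0)·max(n_{j,Ŝ}−1,0), summed over all x-element subsets Ŝ of servers, equals r²·C(c−2,x−2) − 2r·C(c−1,x−1) + C(c,x) − 2·C(c−r,x) + 2r·C(c−r−1,x−1) + C(c−2r,x). -/

import Mathlib

/-!
Write `a = #(A ∩ S)`, `b = #(B ∩ S)`. Since `(a - 1)₊ = (a - 1) + [a = 0]`, the summand splits into
`(a - 1)(b - 1)`, `[a = 0](b - 1)`, `[b = 0](a - 1)` and `[a = 0][b = 0]`. Requiring `a = 0` just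
replaces the ground set `s` by `s \ A`, and every remaining sum is computed by double counting:
`∑_S a = r·C(n-1,x-1)` and, `A` and `B` being disjoint, `∑_S a b = r²·C(n-2,x-2)`.
-/

open Finset

/-- Binomial coefficient `C(a,b)` on integers, with the convention that it is
zero when `b < 0` or `b > a`. -/
def ch (a b : ℤ) : ℤ := if 0 ≤ b ∧ b ≤ a then ((a.toNat).choose b.toNat : ℤ) else 0

lemma ch_natCast (a b : ℕ) : ch a b = a.choose b := by
  unfold ch
  split_ifs with h
  · simp
  · rw [Nat.choose_eq_zero_of_lt (by omega), Nat.cast_zero]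

lemma ch_of_neg {a b : ℤ} (h : b < 0) : ch a b = 0 :=
  if_neg (by omega)

lemma natCast_card_powersetCard {α : Type*} (s : Finset α) (x : ℕ) :
    (#(s.powersetCard x) : ℤ) = ch #s x := by
  rw [card_powersetCard, ch_natCast]

variable {α : Type*} [DecidableEq α]

-- Thanks to the convention of `ch`, no hypothesis `#T ≤ x` is needed.
lemma card_filter_powersetCard_subset_eq_ch {s T : Finset α} (hT : T ⊆ s) (x : ℕ) :
    (#{S ∈ s.powersetCard x | T ⊆ S} : ℤ) = ch (#s - #T) (x - #T) := by
  by_cases hx : #T ≤ x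
  · have hs := card_le_card hT
    rw [card_filter_powersetCard_subset T s x hT hx, ← Nat.cast_sub hs, ← Nat.cast_sub hx,
      ch_natCast]
  · rw [ch_of_neg (by omega), Nat.cast_eq_zero, card_eq_zero, filter_eq_empty_iff]
    intro S hS hTS
    exact hx ((card_le_card hTS).trans_eq (mem_powersetCard.mp hS).2)

lemma sum_powersetCard_card_filter_subset {ι : Type*} {s : Finset α} {k : ℕ} (I : Finset ι)
    (T : ι → Finset α) (hT : ∀ i ∈ I, T i ⊆ s ∧ #(T i) = k) (x : ℕ) :
    ∑ S ∈ s.powersetCard x, (#{i ∈ I | T i ⊆ S} : ℤ) = #I * ch (#s - k) (x - k) := by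
  simp only [card_filter, Nat.cast_sum, Nat.cast_ite, Nat.cast_one, Nat.cast_zero]
  rw [sum_comm, ← nsmul_eq_mul, ← sum_const]
  refine sum_congr rfl fun i hi => ?_
  obtain ⟨hTs, rfl⟩ := hT i hi
  rw [← card_filter_powersetCard_subset_eq_ch hTs, card_filter]
  push_cast
  rfl

lemma sum_powersetCard_card_inter {s B : Finset α} (hB : B ⊆ s) (x : ℕ) :
    ∑ S ∈ s.powersetCard x, (#(B ∩ S) : ℤ) = #B * ch (#s - 1) (x - 1) := by
  have hB1 := sum_powersetCard_card_filter_subset (s := s) B singleton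
    (fun q hq => ⟨singleton_subset_iff.mpr (hB hq), card_singleton q⟩) x
  simpa only [singleton_subset_iff, filter_mem_eq_inter, Nat.cast_one] using hB1

lemma sum_powersetCard_card_inter_mul_card_inter {s A B : Finset α} (hA : A ⊆ s) (hB : B ⊆ s)
    (hAB : Disjoint A B) (x : ℕ) :
    ∑ S ∈ s.powersetCard x, (#(A ∩ S) : ℤ) * #(B ∩ S) = #A * #B * ch (#s - 2) (x - 2) := by
  have hpairs := sum_powersetCard_card_filter_subset (s := s) (A ×ˢ B) (fun p => {p.1, p.2})
    (fun p hp => by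
      obtain ⟨hpA, hpB⟩ := mem_product.mp hp
      exact ⟨insert_subset (hA hpA) (singleton_subset_iff.mpr (hB hpB)),
        card_pair fun h => disjoint_left.mp hAB hpA (h ▸ hpB)⟩) x
  have hfilter (S : Finset α) :
      {p ∈ A ×ˢ B | ({p.1, p.2} : Finset α) ⊆ S} = (A ∩ S) ×ˢ (B ∩ S) := by
    ext p
    simp only [mem_filter, mem_product, mem_inter, insert_subset_iff, singleton_subset_iff]
    tauto
  simpa only [hfilter, card_product, Nat.cast_mul, Nat.cast_ofNat] using hpairs

lemma filter_powersetCard_disjoint (s A : Finset α) (x : ℕ) :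
    {S ∈ s.powersetCard x | Disjoint A S} = (s \ A).powersetCard x := by
  ext S
  simp only [mem_filter, mem_powersetCard, subset_sdiff, disjoint_comm (a := S)]
  tauto

lemma sum_powersetCard_ite_card_inter_eq_zero {M : Type*} [AddCommMonoid M] (s A : Finset α)
    (x : ℕ) (f : Finset α → M) :
    ∑ S ∈ s.powersetCard x, (if #(A ∩ S) = 0 then f S else 0)
      = ∑ S ∈ (s \ A).powersetCard x, f S := by
  simp only [card_eq_zero, ← disjoint_iff_inter_eq_empty]
  rw [← sum_filter, filter_powersetCard_disjoint]

-- `(a - 1)₊ = (a - 1) + [a = 0]`, multiplied out.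
lemma natCast_pred_mul_natCast_pred (a b : ℕ) :
    ((a - 1 : ℕ) : ℤ) * ((b - 1 : ℕ) : ℤ)
      = ((a : ℤ) - 1) * ((b : ℤ) - 1) + (if a = 0 then (b : ℤ) - 1 else 0)
        + (if b = 0 then (a : ℤ) - 1 else 0) + (if a = 0 ∧ b = 0 then 1 else 0) := by
  rcases a with _ | a <;> rcases b with _ | b <;> simp

lemma sum_powersetCard_pred_card_inter_mul_pred_card_inter {s A B : Finset α} (hA : A ⊆ s)
    (hB : B ⊆ s) (hAB : Disjoint A B) (x : ℕ) :
    ∑ S ∈ s.powersetCard x, ((#(A ∩ S) - 1 : ℕ) : ℤ) * ((#(B ∩ S) - 1 : ℕ) : ℤ)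
      = #A * #B * ch (#s - 2) (x - 2) - (#A + #B) * ch (#s - 1) (x - 1) + ch #s x
        - ch (#s - #A) x - ch (#s - #B) x
        + #B * ch (#s - #A - 1) (x - 1) + #A * ch (#s - #B - 1) (x - 1)
        + ch (#s - #A - #B) x := by
  have hBA : B ⊆ s \ A := subset_sdiff.mpr ⟨hB, hAB.symm⟩
  have hAB' : A ⊆ s \ B := subset_sdiff.mpr ⟨hA, hAB⟩
  have hboth (S : Finset α) : (#(A ∩ S) = 0 ∧ #(B ∩ S) = 0) ↔ #((A ∪ B) ∩ S) = 0 := by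
    simp only [card_eq_zero, union_inter_distrib_right, union_eq_empty]
  have hsAB : (#(s \ (A ∪ B)) : ℤ) = #s - #A - #B := by
    rw [cast_card_sdiff (union_subset hA hB), card_union_of_disjoint hAB, Nat.cast_add, sub_sub]
  simp only [natCast_pred_mul_natCast_pred, sum_add_distrib, sub_mul, mul_sub, sum_sub_distrib,
    hboth, sum_powersetCard_ite_card_inter_eq_zero, sum_const, nsmul_eq_mul, mul_one, one_mul,
    natCast_card_powersetCard, sum_powersetCard_card_inter_mul_card_inter hA hB hAB,
    sum_powersetCard_card_inter hA, sum_powersetCard_card_inter hB,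
    sum_powersetCard_card_inter hBA, sum_powersetCard_card_inter hAB',
    cast_card_sdiff hA, cast_card_sdiff hB, hsAB]
  ring

/-- If jobs `a_i`, `a_j` are assigned to disjoint sets `A`, `B` of `r` servers
each (no server gets both jobs), then
`g(0,x) = ∑_{|Ŝ|=x} max(n_{i,Ŝ}-1,0)·max(n_{j,Ŝ}-1,0)` equals
`r²·C(c-2,x-2) - 2r·C(c-1,x-1) + C(c,x) - 2·C(c-r,x) + 2r·C(c-r-1,x-1) + C(c-2r,x)`. -/
theorem g_zero_closed_form (c r x : ℕ) (A B : Finset (Fin c))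
    (hA : A.card = r) (hB : B.card = r) (hAB : Disjoint A B) :
    ∑ S ∈ Finset.powersetCard x (Finset.univ : Finset (Fin c)),
        (((A ∩ S).card - 1 : ℕ) : ℤ) * (((B ∩ S).card - 1 : ℕ) : ℤ)
      = (r : ℤ) ^ 2 * ch ((c : ℤ) - 2) ((x : ℤ) - 2)
        - 2 * (r : ℤ) * ch ((c : ℤ) - 1) ((x : ℤ) - 1)
        + ch (c : ℤ) (x : ℤ)
        - 2 * ch ((c : ℤ) - r) (x : ℤ)
        + 2 * (r : ℤ) * ch ((c : ℤ) - r - 1) ((x : ℤ) - 1)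
        + ch ((c : ℤ) - 2 * r) (x : ℤ) := by
  rw [sum_powersetCard_pred_card_inter_mul_pred_card_inter (subset_univ A) (subset_univ B) hAB,
    card_univ, Fintype.card_fin, hA, hB, sub_sub (c : ℤ) r r, ← two_mul]
  ring
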